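/- Let A ∈ ℂ^{m×p} (m ≥ p) be full rank with polar factor U = P(A), and let Ũ ∈ ℂ^{m×p} have orthonormal columns. Then ‖skew(Ũ*A)‖_F ≤ ‖U − Ũ‖_F · σ₁(A), where skew(B) = (B − B*)/2 and σ₁ is the largest singular value. -/

import Mathlib

open Matrix
open scoped ComplexOrder

/-- Frobenius norm of a complex matrix. -/
noncomputable def frob {m p : ℕ} (A : Matrix (Fin m) (Fin p) ℂ) : ℝ :=
  Real.sqrt (∑ i, ∑ j, ‖A i j‖ ^ 2)

/-- Euclidean norm of a complex vector. -/
noncomputable def vnorm {p : ℕ} (x : Fin p → ℂ) : ℝ :=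
  Real.sqrt (∑ i, ‖x i‖ ^ 2)

/-- The largest singular value of a matrix, characterized as the supremum of `‖A x‖`
over unit vectors `x`. -/
noncomputable def sigmaMax {m p : ℕ} (A : Matrix (Fin m) (Fin p) ℂ) : ℝ :=
  sSup {r : ℝ | ∃ x : Fin p → ℂ, vnorm x = 1 ∧ r = vnorm (A.mulVec x)}


/-! Because `Uᴴ A = H` is Hermitian, `skew (U'ᴴ A) = skew ((U' - U)ᴴ A)`. Taking the skew part
does not increase the Frobenius norm, and `‖(U' - U)ᴴ A‖_F = ‖Aᴴ (U' - U)‖_F` is bounded column by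
column by `‖Aᴴ‖₂ ‖U' - U‖_F`, where `‖Aᴴ‖₂ = ‖A‖₂ = σ₁(A)`. -/

noncomputable def skew {n : Type*} (B : Matrix n n ℂ) : Matrix n n ℂ :=
  (1 / 2 : ℂ) • (B - Bᴴ)

theorem skew_sub {n : Type*} (B C : Matrix n n ℂ) : skew (B - C) = skew B - skew C := by
  simp only [skew, conjTranspose_sub]
  module

theorem skew_eq_zero_of_isHermitian {n : Type*} {B : Matrix n n ℂ} (hB : B.IsHermitian) :
    skew B = 0 := by
  rw [skew, hB.eq, sub_self, smul_zero]

theorem isHermitian_conjTranspose_mul_of_eq_mul {α : Type*} [Semiring α] [StarRing α]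
    {m n : Type*} [Fintype m] [Fintype n] [DecidableEq n] {A U : Matrix m n α}
    {H : Matrix n n α} (hA : A = U * H) (hU : Uᴴ * U = 1) (hH : H.IsHermitian) :
    (Uᴴ * A).IsHermitian := by
  rwa [hA, ← Matrix.mul_assoc, hU, Matrix.one_mul]

theorem vnorm_eq_norm {p : ℕ} (x : Fin p → ℂ) : vnorm x = ‖WithLp.toLp 2 x‖ := by
  rw [EuclideanSpace.norm_eq]; rfl

theorem frob_nonneg {m p : ℕ} (A : Matrix (Fin m) (Fin p) ℂ) : 0 ≤ frob A :=
  Real.sqrt_nonneg _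

section Frobenius

attribute [local instance] Matrix.frobeniusNormedAddCommGroup Matrix.frobeniusNormedSpace

theorem frob_eq_norm {m p : ℕ} (A : Matrix (Fin m) (Fin p) ℂ) : frob A = ‖A‖ := by
  simp only [frob, frobenius_norm_def, Real.rpow_two, Real.sqrt_eq_rpow]

theorem frob_conjTranspose {m p : ℕ} (A : Matrix (Fin m) (Fin p) ℂ) : frob Aᴴ = frob A := by
  rw [frob_eq_norm, frob_eq_norm, frobenius_norm_conjTranspose]

theorem frob_sub_comm {m p : ℕ} (A B : Matrix (Fin m) (Fin p) ℂ) : frob (A - B) = frob (B - A) := by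
  rw [frob_eq_norm, frob_eq_norm, norm_sub_rev]

theorem frob_skew_le {p : ℕ} (B : Matrix (Fin p) (Fin p) ℂ) : frob (skew B) ≤ frob B := by
  have hhalf : ‖(1 / 2 : ℂ)‖ = 1 / 2 := by norm_num
  rw [frob_eq_norm, frob_eq_norm, skew, norm_smul, hhalf]
  calc 1 / 2 * ‖B - Bᴴ‖ ≤ 1 / 2 * (‖B‖ + ‖Bᴴ‖) := by gcongr; exact norm_sub_le B Bᴴ
    _ = ‖B‖ := by rw [frobenius_norm_conjTranspose]; ring

end Frobenius

theorem frob_sq_eq_sum_norm_col_sq {m p : ℕ} (A : Matrix (Fin m) (Fin p) ℂ) :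
    frob A ^ 2 = ∑ j, ‖WithLp.toLp 2 (Aᵀ j)‖ ^ 2 := by
  rw [frob, Real.sq_sqrt (by positivity), Finset.sum_comm]
  simp [EuclideanSpace.norm_sq_eq]

section L2Operator

open scoped Matrix.Norms.L2Operator

theorem sigmaMax_eq_l2_opNorm {m p : ℕ} (A : Matrix (Fin m) (Fin p) ℂ) : sigmaMax A = ‖A‖ := by
  rw [l2_opNorm_def, ← ContinuousLinearMap.sSup_sphere_eq_norm, sigmaMax]
  congr 1
  ext r
  simp only [Set.mem_ofPred_eq, Set.mem_image, mem_sphere_zero_iff_norm]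
  constructor
  · rintro ⟨x, hx, rfl⟩
    exact ⟨WithLp.toLp 2 x, by rwa [← vnorm_eq_norm], by rw [vnorm_eq_norm]; rfl⟩
  · rintro ⟨x, hx, rfl⟩
    exact ⟨x.ofLp, by rwa [vnorm_eq_norm], by rw [vnorm_eq_norm]; rfl⟩

theorem frob_mul_le_l2_opNorm_mul {l m p : ℕ} (A : Matrix (Fin l) (Fin m) ℂ)
    (B : Matrix (Fin m) (Fin p) ℂ) : frob (A * B) ≤ ‖A‖ * frob B := by
  have hcol (j : Fin p) : (A * B)ᵀ j = A *ᵥ Bᵀ j := by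
    ext i
    simp [mulVec, dotProduct, mul_apply]
  rw [← sq_le_sq₀ (frob_nonneg _) (mul_nonneg (norm_nonneg _) (frob_nonneg _)), mul_pow,
    frob_sq_eq_sum_norm_col_sq, frob_sq_eq_sum_norm_col_sq, Finset.mul_sum]
  gcongr with j
  rw [← mul_pow, hcol]
  gcongr
  exact l2_opNorm_mulVec A (WithLp.toLp 2 (Bᵀ j))

theorem frob_conjTranspose_mul_le {m p q : ℕ} (A : Matrix (Fin m) (Fin p) ℂ)
    (B : Matrix (Fin m) (Fin q) ℂ) : frob (Aᴴ * B) ≤ sigmaMax A * frob B := by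
  rw [sigmaMax_eq_l2_opNorm, ← l2_opNorm_conjTranspose]
  exact frob_mul_le_l2_opNorm_mul _ _

end L2Operator

theorem skew_part_bound_general {m p : ℕ}
    (A U U' : Matrix (Fin m) (Fin p) ℂ) (H : Matrix (Fin p) (Fin p) ℂ)
    (hAUH : A = U * H) (hU : Uᴴ * U = 1) (hH : H.PosDef) :
    frob ((1 / 2 : ℂ) • (U'ᴴ * A - (U'ᴴ * A)ᴴ)) ≤ frob (U - U') * sigmaMax A := by
  have hUA : (Uᴴ * A).IsHermitian :=
    isHermitian_conjTranspose_mul_of_eq_mul hAUH hU hH.isHermitian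
  have hskew : skew (U'ᴴ * A) = skew ((U' - U)ᴴ * A) := by
    rw [conjTranspose_sub, Matrix.sub_mul, skew_sub, skew_eq_zero_of_isHermitian hUA, sub_zero]
  calc frob (skew (U'ᴴ * A)) = frob (skew ((U' - U)ᴴ * A)) := by rw [hskew]
    _ ≤ frob ((U' - U)ᴴ * A) := frob_skew_le _
    _ = frob (Aᴴ * (U' - U)) := by
      rw [← frob_conjTranspose, conjTranspose_mul, conjTranspose_conjTranspose]
    _ ≤ sigmaMax A * frob (U' - U) := frob_conjTranspose_mul_le _ _
    _ = frob (U - U') * sigmaMax A := by rw [frob_sub_comm, mul_comm]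

theorem skew_part_bound {m p : ℕ} (hmp : p ≤ m)
    (A U U' : Matrix (Fin m) (Fin p) ℂ) (H : Matrix (Fin p) (Fin p) ℂ)
    (hA : A.rank = p)
    (hAUH : A = U * H) (hU : Uᴴ * U = 1) (hH : H.PosDef)
    (hU' : U'ᴴ * U' = 1) :
    frob ((1 / 2 : ℂ) • (U'ᴴ * A - (U'ᴴ * A)ᴴ)) ≤ frob (U - U') * sigmaMax A :=
  skew_part_bound_general A U U' H hAUH hU hH
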